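/- The function g(β) = β B(β, 1/2) / 2^{2β−1} − 1 is monotonically decreasing in β on (0,1], satisfies g(1) = 0, and takes values in (0,1) for β ∈ (0,1); in particular, for every β ∈ (0,1) there is a unique θ*(β) ∈ (0,1) with (1 − θ*(β))^{−2} · g(β) = 1. -/

import Mathlib

open Real

/-- The Euler Beta function `B(x,y) = Γ(x)Γ(y)/Γ(x+y)`. -/
noncomputable def eulerBeta (x y : ℝ) : ℝ :=
  Real.Gamma x * Real.Gamma y / Real.Gamma (x + y)

/-- The coefficient `g(β) = β B(β,1/2) / 2^{2β−1} − 1` appearing in the variance of the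
fractional Poisson process. -/
noncomputable def gBeta (β : ℝ) : ℝ :=
  β * eulerBeta β (1 / 2) / (2 : ℝ) ^ (2 * β - 1) - 1

/-!
By Legendre's duplication formula, `g(β) = 2 Γ(1+β)² / Γ(1+2β) - 1`. Since
`log Γ(x) = log Γ(x+1) - log x`, the function `log Γ` is strictly convex on `(0, ∞)`, so its
increments over intervals of fixed length strictly increase as the interval moves right.
Splitting `[1+2a, 1+2b]` at `1+a+b` into two translates of `[1+a, 1+b]` shows that
`2 log Γ(1+β) - log Γ(1+2β)` is strictly decreasing on `[0, ∞)`; it vanishes at `0`, which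
gives `g < 1`, and `g(1) = 2 Γ(2)² / Γ(3) - 1 = 0` gives `g > 0` on `(0, 1)`. Finally
`θ* = 1 - √g`.
-/

open Set

theorem strictConvexOn_log_Gamma : StrictConvexOn ℝ (Ioi 0) (log ∘ Gamma) := by
  have shifted : ConvexOn ℝ (Ioi 0) fun x => log (Gamma (1 + x)) :=
    (convexOn_log_Gamma.translate_right 1).subset
      (fun x (hx : 0 < x) => show 0 < 1 + x by linarith) (convex_Ioi 0)
  refine (shifted.add_strictConvexOn strictConcaveOn_log_Ioi.neg).congr fun x (hx : 0 < x) => ?_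
  simp only [Pi.add_apply, Pi.neg_apply, Function.comp_apply]
  rw [add_comm 1 x, Gamma_add_one hx.ne', log_mul hx.ne' (Gamma_pos_of_pos hx).ne']
  ring

section Increments

variable {s : Set ℝ} {f : ℝ → ℝ} {x x' y y' : ℝ}

theorem StrictConvexOn.sub_lt_sub_of_lt_of_sub_eq (hf : StrictConvexOn ℝ s f) (hx : x ∈ s)
    (hx' : x' ∈ s) (hy : y ∈ s) (hy' : y' ∈ s) (hxy : x < y) (hxx' : x < x')
    (hlen : x' - x = y' - y) :
    f x' - f x < f y' - f y := by
  have h₁ : (f x' - f x) / (x' - x) < (f y' - f x) / (y' - x) :=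
    hf.secant_strict_mono hx hx' hy' (by linarith) (by linarith) (by linarith)
  have h₂ : (f y' - f x) / (y' - x) < (f y' - f y) / (y' - y) := by
    have := hf.secant_strict_mono hy' hx hy (by linarith) (by linarith) hxy
    rwa [← neg_div_neg_eq, neg_sub, neg_sub, ← neg_div_neg_eq (f y - _), neg_sub, neg_sub]
      at this
  rw [← hlen] at h₂
  exact (div_lt_div_iff_of_pos_right (sub_pos.2 hxx')).1 (h₁.trans h₂)

theorem StrictConvexOn.sub_le_sub_of_le_of_sub_eq (hf : StrictConvexOn ℝ s f) (hx : x ∈ s)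
    (hx' : x' ∈ s) (hy : y ∈ s) (hy' : y' ∈ s) (hxy : x ≤ y) (hxx' : x < x')
    (hlen : x' - x = y' - y) :
    f x' - f x ≤ f y' - f y := by
  rcases hxy.eq_or_lt with rfl | hxy
  · rw [show y' = x' by linarith]
  · exact (hf.sub_lt_sub_of_lt_of_sub_eq hx hx' hy hy' hxy hxx' hlen).le

end Increments

theorem strictAntiOn_two_mul_log_Gamma_one_add_sub :
    StrictAntiOn (fun β => 2 * log (Gamma (1 + β)) - log (Gamma (1 + 2 * β))) (Ici 0) := by
  intro a (ha : 0 ≤ a) b (hb : 0 ≤ b) hab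
  have mem : ∀ {x : ℝ}, 0 ≤ x → 1 + x ∈ Ioi 0 := fun {x} hx => mem_Ioi.2 (by linarith)
  have right := strictConvexOn_log_Gamma.sub_lt_sub_of_lt_of_sub_eq (mem ha) (mem hb)
    (mem (add_nonneg ha hb)) (mem (by positivity : 0 ≤ 2 * b)) (by linarith) (by linarith)
    (by ring : 1 + b - (1 + a) = 1 + 2 * b - (1 + (a + b)))
  have left := strictConvexOn_log_Gamma.sub_le_sub_of_le_of_sub_eq (mem ha) (mem hb)
    (mem (by positivity : 0 ≤ 2 * a)) (mem (add_nonneg ha hb)) (by linarith) (by linarith)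
    (by ring : 1 + b - (1 + a) = 1 + (a + b) - (1 + 2 * a))
  simp only [Function.comp_apply] at right left
  linarith

theorem strictAntiOn_Gamma_one_add_sq_div :
    StrictAntiOn (fun β => Gamma (1 + β) ^ 2 / Gamma (1 + 2 * β)) (Ici 0) := by
  intro a (ha : 0 ≤ a) b (hb : 0 ≤ b) hab
  have hlog := strictAntiOn_two_mul_log_Gamma_one_add_sub ha hb hab
  rw [← log_lt_log_iff (by positivity) (by positivity), log_div, log_div, log_pow, log_pow]
  · exact_mod_cast hlog
  all_goals positivity

theorem gBeta_eq_two_mul_Gamma_sq_div_sub_one {β : ℝ} (hβ : 0 < β) :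
    gBeta β = 2 * (Gamma (1 + β) ^ 2 / Gamma (1 + 2 * β)) - 1 := by
  have hdup := Gamma_mul_Gamma_add_half β
  have hpow : (2 : ℝ) ^ (2 * β - 1) * 2 ^ (1 - 2 * β) = 1 := by
    rw [← rpow_add two_pos]; norm_num
  have hΓhalf : Gamma (β + 1 / 2) ≠ 0 := (Gamma_pos_of_pos (by positivity)).ne'
  have hΓtwo : Gamma (2 * β) ≠ 0 := (Gamma_pos_of_pos (by positivity)).ne'
  rw [gBeta, eulerBeta, Gamma_one_half_eq, add_comm 1 β, add_comm 1 (2 * β),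
    Gamma_add_one hβ.ne', Gamma_add_one (by positivity)]
  congr 1
  field_simp
  linear_combination (norm := ring_nf)
    (-(2 : ℝ) ^ (2 * β - 1)) * hdup - √π * Gamma (2 * β) * hpow

theorem strictAntiOn_gBeta : StrictAntiOn gBeta (Ioi 0) := by
  intro a (ha : 0 < a) b (hb : 0 < b) hab
  rw [gBeta_eq_two_mul_Gamma_sq_div_sub_one ha, gBeta_eq_two_mul_Gamma_sq_div_sub_one hb]
  linarith [strictAntiOn_Gamma_one_add_sq_div (mem_Ici.2 ha.le) (mem_Ici.2 hb.le) hab]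

theorem gBeta_one : gBeta 1 = 0 := by
  rw [gBeta_eq_two_mul_Gamma_sq_div_sub_one one_pos]
  norm_num [show (3 : ℝ) = 2 + 1 by norm_num, Gamma_add_one]

theorem gBeta_lt_one {β : ℝ} (hβ : 0 < β) : gBeta β < 1 := by
  have := strictAntiOn_Gamma_one_add_sq_div (mem_Ici.2 le_rfl) (mem_Ici.2 hβ.le) hβ
  rw [gBeta_eq_two_mul_Gamma_sq_div_sub_one hβ]
  simp only [mul_zero, add_zero, Gamma_one, one_pow, div_one] at this
  linarith

theorem existsUnique_inv_one_sub_sq_mul_eq_one {c : ℝ} (hc : c ∈ Ioo 0 1) :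
    ∃! θ : ℝ, θ ∈ Ioo 0 1 ∧ ((1 - θ) ^ 2)⁻¹ * c = 1 := by
  have hsqrt : √c ∈ Ioo 0 1 := ⟨sqrt_pos.2 hc.1, (sqrt_lt' one_pos).2 (by simpa using hc.2)⟩
  refine ⟨1 - √c, ⟨⟨by linarith [hsqrt.2], by linarith [hsqrt.1]⟩, ?_⟩, ?_⟩
  · rw [sub_sub_cancel, sq_sqrt hc.1.le, inv_mul_cancel₀ hc.1.ne']
  · rintro θ ⟨hθ, hθc⟩
    have hsq : (1 - θ) ^ 2 = c := by
      rwa [inv_mul_eq_one₀ (by nlinarith [hθ.2])] at hθc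
    rw [← hsq, sqrt_sq (by linarith [hθ.2])]
    ring

/-- `g(β) = β B(β,1/2)/2^{2β−1} − 1` is strictly decreasing on `(0,1]`,
`g(1) = 0`, `g(β) ∈ (0,1)` for `β ∈ (0,1)`, and for every `β ∈ (0,1)` there is a unique
`θ*(β) ∈ (0,1)` with `(1 − θ*(β))⁻² · g(β) = 1`. -/
theorem gBeta_properties :
    StrictAntiOn gBeta (Set.Ioc (0 : ℝ) 1) ∧
    gBeta 1 = 0 ∧
    (∀ β ∈ Set.Ioo (0 : ℝ) 1, gBeta β ∈ Set.Ioo (0 : ℝ) 1) ∧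
    (∀ β ∈ Set.Ioo (0 : ℝ) 1,
      ∃! θ : ℝ, θ ∈ Set.Ioo (0 : ℝ) 1 ∧ ((1 - θ) ^ 2)⁻¹ * gBeta β = 1) := by
  have mem_Ioo : ∀ β ∈ Ioo (0 : ℝ) 1, gBeta β ∈ Ioo 0 1 := fun β hβ =>
    ⟨gBeta_one ▸ strictAntiOn_gBeta hβ.1 (mem_Ioi.2 one_pos) hβ.2, gBeta_lt_one hβ.1⟩
  exact ⟨strictAntiOn_gBeta.mono Ioc_subset_Ioi_self, gBeta_one, mem_Ioo,
    fun β hβ => existsUnique_inv_one_sub_sq_mul_eq_one (mem_Ioo β hβ)⟩
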